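/- Consider gradient descent θ^{(t+1)} = θ^{(t)} − (η/n) Xᵀ(Xθ^{(t)} − y) on the OLS objective (1/n)‖y − Xθ‖² starting from θ^{(0)} = 0, with step size η < 1/‖XᵀX‖_op. Writing (1/n)XᵀX = V S Vᵀ (eigendecomposition with S positive definite), for every t ≥ 1 the iterate θ^{(t)} is the unique minimizer of (1/n)‖y − Xθ‖² + θᵀΛ^{(t)}θ where Λ^{(t)} = V S((I − ηS)^{−t} − I)^{−1} Vᵀ. -/

import Mathlib

open Matrix

lemma diag_inv' {p : ℕ} (f : Fin p → ℝ) (hf : ∀ i, f i ≠ 0) :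
    (Matrix.diagonal f)⁻¹ = Matrix.diagonal (fun i => (f i)⁻¹) := by
  apply Matrix.inv_eq_right_inv
  rw [Matrix.diagonal_mul_diagonal]
  have : (fun i => f i * (f i)⁻¹) = fun _ => (1:ℝ) := funext fun i => mul_inv_cancel₀ (hf i)
  rw [this, Matrix.diagonal_one]

lemma diag_sub_one_inv {p : ℕ} (f : Fin p → ℝ) (hf : ∀ i, f i - 1 ≠ 0) :
    ((Matrix.diagonal f - 1)⁻¹ : Matrix (Fin p) (Fin p) ℝ)
      = Matrix.diagonal (fun i => (f i - 1)⁻¹) := by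
  rw [← Matrix.diagonal_one, Matrix.diagonal_sub]
  exact diag_inv' _ hf

lemma diag_pow_inv {p : ℕ} (m : Fin p → ℝ) (t : ℕ) :
    (Matrix.diagonal (fun i => (m i)⁻¹) ^ t : Matrix (Fin p) (Fin p) ℝ)
      = Matrix.diagonal (fun i => (m i ^ t)⁻¹) := by
  rw [Matrix.diagonal_pow]
  have : ((fun i => (m i)⁻¹) ^ t : Fin p → ℝ) = fun i => (m i ^ t)⁻¹ :=
    funext fun i => inv_pow (m i) t
  rw [this]

/-- Early-stopped gradient descent for OLS (Ali et al.): GD iterates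
`θ^{(t+1)} = θ^{(t)} − (η/n) Xᵀ(Xθ^{(t)} − y)` from `θ^{(0)} = 0`, with
`(1/n)XᵀX = V S Vᵀ` (V orthogonal, `S = diag s` positive definite) and each
eigenvalue of `I − ηS` in `(0,1)`. Then for every `t ≥ 1`, `θ^{(t)}` is the
unique minimizer of `(1/n)‖y − Xθ‖² + θᵀΛ^{(t)}θ` with
`Λ^{(t)} = V S((I − ηS)^{−t} − I)^{−1} Vᵀ`. -/
theorem stmt7 {n p : ℕ} (hn : 0 < n) (X : Matrix (Fin n) (Fin p) ℝ) (y : Fin n → ℝ)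
    (η : ℝ) (hη : 0 < η)
    (V : Matrix (Fin p) (Fin p) ℝ) (hV : Vᵀ * V = 1)
    (s : Fin p → ℝ) (hs : ∀ i, 0 < s i) (hηs : ∀ i, η * s i < 1)
    (heig : (n : ℝ)⁻¹ • (Xᵀ * X) = V * Matrix.diagonal s * Vᵀ)
    (θ : ℕ → Fin p → ℝ) (hθ0 : θ 0 = 0)
    (hθstep : ∀ t, θ (t + 1) = θ t - (η / n) • Xᵀ.mulVec (X.mulVec (θ t) - y))
    (Λ : ℕ → Matrix (Fin p) (Fin p) ℝ)
    (hΛ : ∀ t, Λ t = V * Matrix.diagonal s *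
      ((((1 : Matrix (Fin p) (Fin p) ℝ) - η • Matrix.diagonal s)⁻¹ ^ t
        - 1)⁻¹) * Vᵀ)
    (g : ℕ → (Fin p → ℝ) → ℝ)
    (hg : ∀ t θ', g t θ' =
      (n : ℝ)⁻¹ * ((y - X.mulVec θ') ⬝ᵥ (y - X.mulVec θ')) +
      θ' ⬝ᵥ (Λ t).mulVec θ') :
    ∀ t : ℕ, 1 ≤ t → ∀ θ' : Fin p → ℝ, θ' ≠ θ t → g t (θ t) < g t θ' := by
  have hn' : (n:ℝ) ≠ 0 := Nat.cast_ne_zero.mpr hn.ne'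
  have hVV : V * Vᵀ = 1 := mul_eq_one_comm.mp hV
  set m : Fin p → ℝ := fun i => 1 - η * s i with hm
  have hm0 : ∀ i, 0 < m i := fun i => by have := hηs i; simp only [hm]; linarith
  have hm1 : ∀ i, m i < 1 := fun i => by
    have := mul_pos hη (hs i); simp only [hm]; linarith
  have hs0 : ∀ i, s i ≠ 0 := fun i => (hs i).ne'
  have hmne : ∀ i, m i ≠ 0 := fun i => (hm0 i).ne'
  have h1 : (1 : Matrix (Fin p) (Fin p) ℝ) - η • Matrix.diagonal s = Matrix.diagonal m := by
    rw [← Matrix.diagonal_one, ← Matrix.diagonal_smul, Matrix.diagonal_sub]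
    congr 1
  have hb' : ∀ u : Fin p → ℝ, V *ᵥ (Vᵀ *ᵥ u) = u := fun u => by
    rw [Matrix.mulVec_mulVec, hVV, Matrix.one_mulVec]
  set b : Fin p → ℝ := (n:ℝ)⁻¹ • (Xᵀ *ᵥ y) with hbdef
  set c : Fin p → ℝ := Vᵀ *ᵥ b with hcdef
  have hVc : V *ᵥ c = b := hb' b
  set φ : ℕ → Fin p → ℝ := fun u i => (1 - m i ^ u) / s i * c i with hφ
  -- a cleaner form of the gradient step
  have hstep' : ∀ u, θ (u+1) = θ u - η • ((V * Matrix.diagonal s * Vᵀ) *ᵥ θ u) + η • b := by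
    intro u
    rw [hθstep u, Matrix.mulVec_sub, Matrix.mulVec_mulVec, smul_sub]
    have e1 : (η / (n:ℝ)) • ((Xᵀ*X) *ᵥ θ u) = η • ((V * Matrix.diagonal s * Vᵀ) *ᵥ θ u) := by
      rw [← heig, Matrix.smul_mulVec, smul_smul, div_eq_mul_inv]
    have e2 : (η / (n:ℝ)) • (Xᵀ *ᵥ y) = η • b := by
      rw [hbdef, smul_smul, div_eq_mul_inv]
    rw [e1, e2]
    abel
  -- closed form of the iterates
  have hθt : ∀ u, θ u = V *ᵥ φ u := by
    intro u
    induction u with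
    | zero =>
      rw [hθ0]
      have : φ 0 = 0 := by funext i; simp [hφ]
      rw [this, Matrix.mulVec_zero]
    | succ u ih =>
      have h2 : (V * Matrix.diagonal s * Vᵀ) *ᵥ (V *ᵥ φ u)
          = V *ᵥ (Matrix.diagonal s *ᵥ φ u) := by
        rw [Matrix.mulVec_mulVec, Matrix.mul_assoc (V * Matrix.diagonal s), hV,
          Matrix.mul_one, ← Matrix.mulVec_mulVec]
      have key : φ u - η • (Matrix.diagonal s *ᵥ φ u) + η • c = φ (u+1) := by
        funext i
        simp only [Pi.add_apply, Pi.sub_apply, Pi.smul_apply, smul_eq_mul, hφ,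
          Matrix.mulVec_diagonal, hm]
        rw [pow_succ]
        field_simp [hs0 i]
        ring
      calc θ (u+1) = V *ᵥ φ u - η • (V *ᵥ (Matrix.diagonal s *ᵥ φ u)) + η • (V *ᵥ c) := by
            rw [hstep' u, ih, h2, hVc]
        _ = V *ᵥ (φ u - η • (Matrix.diagonal s *ᵥ φ u) + η • c) := by
            rw [Matrix.mulVec_add, Matrix.mulVec_sub, Matrix.mulVec_smul, Matrix.mulVec_smul]
        _ = V *ᵥ φ (u+1) := by rw [key]
  intro t ht θ' hne
  have htne : t ≠ 0 := by omega
  have hmt : ∀ i, m i ^ t < 1 := fun i => pow_lt_one₀ (hm0 i).le (hm1 i) htne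
  have hmt0 : ∀ i, 0 < m i ^ t := fun i => pow_pos (hm0 i) t
  have hmtne : ∀ i, (1:ℝ) - m i ^ t ≠ 0 := fun i => by have := hmt i; intro h; linarith
  set q : Fin p → ℝ := fun i => s i / (1 - m i ^ t) with hq
  have hq0 : ∀ i, 0 < q i := fun i => div_pos (hs i) (by have := hmt i; linarith)
  have hinvne : ∀ i, (m i ^ t)⁻¹ - 1 ≠ 0 := by
    intro i
    have h2 : 1 < (m i ^ t)⁻¹ := (one_lt_inv₀ (hmt0 i)).mpr (hmt i)
    intro h; linarith
  -- diagonalization of Λ t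
  have hΛdiag : Λ t = V * Matrix.diagonal (fun i => s i * ((m i ^ t)⁻¹ - 1)⁻¹) * Vᵀ := by
    rw [hΛ t, h1, diag_inv' m hmne, diag_pow_inv m t, diag_sub_one_inv _ hinvne,
      Matrix.mul_assoc V, Matrix.diagonal_mul_diagonal]
  -- the regularized quadratic's matrix, diagonalized
  have hQ : (n:ℝ)⁻¹ • (Xᵀ * X) + Λ t = V * Matrix.diagonal q * Vᵀ := by
    rw [heig, hΛdiag, ← Matrix.add_mul, ← Matrix.mul_add, Matrix.diagonal_add]
    have e : (fun i => s i + s i * ((m i ^ t)⁻¹ - 1)⁻¹) = q := by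
      funext i
      have e2 : (m i ^ t)⁻¹ - 1 = (1 - m i ^ t) / (m i ^ t) := by
        field_simp [(hmt0 i).ne']
      rw [e2, inv_div, hq]
      field_simp [hmtne i]
      ring
    rw [e]
  -- θ t is the stationary point
  have hQθ : (V * Matrix.diagonal q * Vᵀ) *ᵥ θ t = b := by
    rw [hθt t, Matrix.mulVec_mulVec, Matrix.mul_assoc (V * Matrix.diagonal q), hV,
      Matrix.mul_one, ← Matrix.mulVec_mulVec]
    have e : Matrix.diagonal q *ᵥ φ t = c := by
      funext i
      simp only [Matrix.mulVec_diagonal, hφ, hq]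
      field_simp
      rw [div_eq_iff (mul_ne_zero (hs0 i) (hmtne i))]
      ring
    rw [e, hVc]
  have hsym : (V * Matrix.diagonal q * Vᵀ)ᵀ = V * Matrix.diagonal q * Vᵀ := by
    rw [Matrix.transpose_mul, Matrix.transpose_mul, Matrix.transpose_transpose,
      Matrix.diagonal_transpose, Matrix.mul_assoc]
  -- quadratic form expansion of g
  have hXz : ∀ z : Fin p → ℝ, (X *ᵥ z) ⬝ᵥ (X *ᵥ z) = z ⬝ᵥ ((Xᵀ * X) *ᵥ z) := by
    intro z
    rw [Matrix.dotProduct_mulVec, Matrix.dotProduct_mulVec, ← Matrix.vecMul_vecMul,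
      Matrix.vecMul_transpose]
  have hyXz : ∀ z : Fin p → ℝ, y ⬝ᵥ (X *ᵥ z) = (Xᵀ *ᵥ y) ⬝ᵥ z := by
    intro z
    rw [Matrix.dotProduct_mulVec, Matrix.mulVec_transpose]
  have hgq : ∀ z : Fin p → ℝ, g t z = (n:ℝ)⁻¹ * (y ⬝ᵥ y)
      + z ⬝ᵥ ((V * Matrix.diagonal q * Vᵀ) *ᵥ z) - 2 * (b ⬝ᵥ z) := by
    intro z
    rw [hg, ← hQ, Matrix.add_mulVec, dotProduct_add, Matrix.smul_mulVec,
      dotProduct_smul, dotProduct_sub, sub_dotProduct,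
      sub_dotProduct, hXz z, dotProduct_comm (X *ᵥ z) y, hyXz z,
      hbdef, smul_dotProduct]
    simp only [smul_eq_mul]
    ring
  -- positivity of the quadratic form
  set w : Fin p → ℝ := θ' - θ t with hwdef
  have hw0 : w ≠ 0 := sub_ne_zero.mpr hne
  have hu0 : Vᵀ *ᵥ w ≠ 0 := by
    intro h
    apply hw0
    rw [← hb' w, h, Matrix.mulVec_zero]
  have hpos : 0 < w ⬝ᵥ ((V * Matrix.diagonal q * Vᵀ) *ᵥ w) := by
    have e : w ⬝ᵥ ((V * Matrix.diagonal q * Vᵀ) *ᵥ w)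
        = ∑ i, (Vᵀ *ᵥ w) i * (q i * (Vᵀ *ᵥ w) i) := by
      rw [← Matrix.mulVec_mulVec, ← Matrix.mulVec_mulVec, Matrix.dotProduct_mulVec,
        ← Matrix.mulVec_transpose]
      simp [dotProduct, Matrix.mulVec_diagonal]
    rw [e]
    obtain ⟨j, hj⟩ := Function.ne_iff.mp hu0
    apply Finset.sum_pos'
    · intro i _
      have := (hq0 i).le
      nlinarith [mul_self_nonneg ((Vᵀ *ᵥ w) i)]
    · refine ⟨j, Finset.mem_univ j, ?_⟩
      have h2 : 0 < (Vᵀ *ᵥ w) j * (Vᵀ *ᵥ w) j := mul_self_pos.mpr hj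
      nlinarith [hq0 j]
  -- conclusion
  have c1 : θ' ⬝ᵥ b = b ⬝ᵥ θ' := dotProduct_comm _ _
  have c2 : θ t ⬝ᵥ b = b ⬝ᵥ θ t := dotProduct_comm _ _
  have c4 : θ t ⬝ᵥ ((V * Matrix.diagonal q * Vᵀ) *ᵥ θ') = b ⬝ᵥ θ' := by
    rw [Matrix.dotProduct_mulVec, ← Matrix.mulVec_transpose, hsym, hQθ]
  have c3 : θ t ⬝ᵥ ((V * Matrix.diagonal q * Vᵀ) *ᵥ θ t) = b ⬝ᵥ θ t := by
    rw [hQθ, c2]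
  have e2 : w ⬝ᵥ ((V * Matrix.diagonal q * Vᵀ) *ᵥ w)
      = θ' ⬝ᵥ ((V * Matrix.diagonal q * Vᵀ) *ᵥ θ') - b ⬝ᵥ θ' - b ⬝ᵥ θ' + b ⬝ᵥ θ t := by
    have e3 : (V * Matrix.diagonal q * Vᵀ) *ᵥ w = (V * Matrix.diagonal q * Vᵀ) *ᵥ θ' - b := by
      rw [hwdef, Matrix.mulVec_sub, hQθ]
    rw [e3, hwdef, sub_dotProduct, dotProduct_sub, dotProduct_sub,
      c4, c1, c2]
    ring
  rw [hgq θ', hgq (θ t), c3]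
  linarith [hpos, e2]
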